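/- arXiv:1608.08663 — 2 statements merged into one kernel-verified Lean document; each statement's English description precedes it below -/
import Mathlib

section
/- Let g ∈ ℂ[z] be a univariate polynomial of degree δ and let k ≥ 0. Suppose h ∈ ℂ[z] is a polynomial (of degree δ) such that ∏_{j=0}^{2^k−1} g(e^{2πij/2^k} z) = h(z^{2^k}). Then ∏_{j=0}^{2^{k+1}−1} g(e^{2πij/2^{k+1}} z) = h(z^{2^k}) · h(−z^{2^k}). In other words, one obtains the cyclic resultant of level k+1 from that of level k by multiplying it with the polynomial obtained by negating the coefficients of all terms whose degree is not divisible by 2^{k+1}. -/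
open Finset

/-
Let `ζ = exp(2πi/2^{k+1})`. Splitting the indices `j < 2^{k+1}` by parity, the even ones give
`ζ^{2m} = exp(2πim/2^k)`, i.e. the level-`k` product at `z`, and the odd ones give the level-`k`
product at `ζ z`. Since `ζ^{2^k} = -1`, the hypothesis turns these into `h(z^{2^k})` and
`h(-z^{2^k})`.
-/

theorem Finset.prod_range_two_mul {M : Type*} [CommMonoid M] (f : ℕ → M) (n : ℕ) :
    ∏ j ∈ range (2 * n), f j = (∏ m ∈ range n, f (2 * m)) * ∏ m ∈ range n, f (2 * m + 1) := by
  induction n with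
  | zero => simp
  | succ n ih =>
    rw [Nat.mul_succ, prod_range_succ, prod_range_succ, ih, prod_range_succ, prod_range_succ]
    ac_rfl

theorem Finset.prod_range_two_mul_pow_mul {M N : Type*} [Monoid M] [CommMonoid N]
    (f : M → N) (ζ z : M) (n : ℕ) :
    ∏ j ∈ range (2 * n), f (ζ ^ j * z) =
      (∏ m ∈ range n, f ((ζ ^ 2) ^ m * z)) * ∏ m ∈ range n, f ((ζ ^ 2) ^ m * (ζ * z)) := by
  simp only [prod_range_two_mul, pow_succ, mul_assoc, pow_mul]

theorem cyclic_resultant_doubling_step_general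
    (k : ℕ) (g h : Polynomial ℂ)
    (hh : ∀ z : ℂ, ∏ j ∈ Finset.range (2 ^ k),
        g.eval (Complex.exp (2 * Real.pi * Complex.I * j / 2 ^ k) * z) =
      h.eval (z ^ 2 ^ k)) :
    ∀ z : ℂ, ∏ j ∈ Finset.range (2 ^ (k + 1)),
        g.eval (Complex.exp (2 * Real.pi * Complex.I * j / 2 ^ (k + 1)) * z) =
      h.eval (z ^ 2 ^ k) * h.eval (-(z ^ 2 ^ k)) := by
  intro z
  set ζ := Complex.exp (2 * Real.pi * Complex.I / 2 ^ (k + 1))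
  have hroot (j : ℕ) : Complex.exp (2 * Real.pi * Complex.I * j / 2 ^ (k + 1)) = ζ ^ j := by
    rw [← Complex.exp_nat_mul]
    ring_nf
  have hsq (j : ℕ) : Complex.exp (2 * Real.pi * Complex.I * j / 2 ^ k) = (ζ ^ 2) ^ j := by
    rw [← pow_mul, ← hroot]
    push_cast
    ring_nf
  have hneg : ζ ^ 2 ^ k = -1 := by
    rw [← Complex.exp_pi_mul_I, ← Complex.exp_nat_mul]
    congr 1
    push_cast
    field_simp
    ring
  calc ∏ j ∈ range (2 ^ (k + 1)),
        g.eval (Complex.exp (2 * Real.pi * Complex.I * j / 2 ^ (k + 1)) * z)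
      = ∏ j ∈ range (2 * 2 ^ k), g.eval (ζ ^ j * z) := by
        simp only [hroot]
        rw [pow_succ']
    _ = (∏ m ∈ range (2 ^ k), g.eval ((ζ ^ 2) ^ m * z)) *
          ∏ m ∈ range (2 ^ k), g.eval ((ζ ^ 2) ^ m * (ζ * z)) :=
        prod_range_two_mul_pow_mul (g.eval ·) ζ z (2 ^ k)
    _ = h.eval (z ^ 2 ^ k) * h.eval (-(z ^ 2 ^ k)) := by
        simp only [← hsq, hh, mul_pow, hneg, neg_one_mul]

/-- The doubling step of the quick cyclic resultant algorithm: if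
`∏_{j<2ᵏ} g(e^{2πij/2ᵏ} z) = h(z^{2ᵏ})`, then
`∏_{j<2^{k+1}} g(e^{2πij/2^{k+1}} z) = h(z^{2ᵏ}) ⬝ h(-z^{2ᵏ})`. -/
theorem cyclic_resultant_doubling_step
    (δ k : ℕ) (g h : Polynomial ℂ)
    (hgdeg : g.natDegree = δ) (hhdeg : h.natDegree = δ)
    (hh : ∀ z : ℂ, ∏ j ∈ Finset.range (2 ^ k),
        g.eval (Complex.exp (2 * Real.pi * Complex.I * j / 2 ^ k) * z) =
      h.eval (z ^ 2 ^ k)) :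
    ∀ z : ℂ, ∏ j ∈ Finset.range (2 ^ (k + 1)),
        g.eval (Complex.exp (2 * Real.pi * Complex.I * j / 2 ^ (k + 1)) * z) =
      h.eval (z ^ 2 ^ k) * h.eval (-(z ^ 2 ^ k)) :=
  cyclic_resultant_doubling_step_general k g h hh
end

section
/- Let f be a nonzero Laurent polynomial in n complex variables and let r be a positive integer. Then the zero set of cres(f;r) in the torus (ℂ∖{0})^n is the union, over all n-tuples ω = (ω_1,…,ω_n) of r-th roots of unity, of the sets {(ω_1 z_1, …, ω_n z_n) : f(z) = 0, z ∈ (ℂ∖{0})^n}. Consequently, the amoeba of the cyclic resultant equals the amoeba of f: A(cres(f;r)) = A(f); in particular A(f) ⊆ L(cres(f;r)) for every r ≥ 1. -/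
open Finset

/-- Evaluation of the Laurent polynomial `f(z) = ∑ j, b j * z ^ α j` with
coefficients `b` and integer exponent vectors `α`. -/
noncomputable def lauEval {n d : ℕ} (b : Fin d → ℂ) (α : Fin d → Fin n → ℤ)
    (z : Fin n → ℂ) : ℂ :=
  ∑ j, b j * ∏ i, z i ^ α j i

/-- The amoeba of the Laurent polynomial given by `b, α`: the image of its zero
set in the torus under the coordinatewise log-absolute-value map. -/
def amoeba {n d : ℕ} (b : Fin d → ℂ) (α : Fin d → Fin n → ℤ) :
    Set (Fin n → ℝ) :=
  {w | ∃ z : Fin n → ℂ, (∀ i, z i ≠ 0) ∧ lauEval b α z = 0 ∧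
    ∀ i, w i = Real.log ‖z i‖}

/-- Lopsidedness of the Laurent polynomial given by `b, α` at the point
`w ∈ ℝⁿ` (i.e. at `Log|v|` where `|v i| = exp (w i)`). -/
def IsLopsidedAt {n d : ℕ} (b : Fin d → ℂ) (α : Fin d → Fin n → ℤ)
    (w : Fin n → ℝ) : Prop :=
  ∃ k : Fin d,
    (∑ j ∈ Finset.univ.erase k, ‖b j‖ * ∏ i, Real.exp (w i) ^ α j i) <
      ‖b k‖ * ∏ i, Real.exp (w i) ^ α k i

/-- The lopsided amoeba: the set of points where the polynomial is not lopsided. -/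
def lopAmoeba {n d : ℕ} (b : Fin d → ℂ) (α : Fin d → Fin n → ℤ) :
    Set (Fin n → ℝ) :=
  {w | ¬ IsLopsidedAt b α w}

/-- The cyclic resultant `cres(f; r)` of the Laurent polynomial given by `b, α`,
evaluated at `z`; it is the product of `f(ω₁ z₁, …, ωₙ zₙ)` over all `n`-tuples
`ω` of `r`-th roots of unity. -/
noncomputable def cresEval {n d : ℕ} (b : Fin d → ℂ) (α : Fin d → Fin n → ℤ)
    (r : ℕ) (z : Fin n → ℂ) : ℂ :=
  ∏ t : Fin n → Fin r,
    lauEval b α (fun i => Complex.exp (2 * Real.pi * Complex.I * (t i : ℕ) / r) * z i)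

/-! Every factor of `cres(f;r)` is `f` precomposed with a coordinatewise rotation by `r`-th roots
of unity, so the torus zeros of `cres(f;r)` are the rotated torus zeros of `f`. Rotations by
roots of unity preserve `Log|·|`, hence the two amoebas agree. Finally, at a point of the amoeba
of any Laurent polynomial the triangle inequality prevents one term from dominating the others. -/

noncomputable section

namespace Amoeba

variable {n : ℕ}

def unitRoot (r k : ℕ) : ℂ :=
  Complex.exp (2 * Real.pi * Complex.I * k / r)

lemma norm_unitRoot (r k : ℕ) : ‖unitRoot r k‖ = 1 := by
  rw [unitRoot, show (2 * (Real.pi : ℂ) * Complex.I * k / r : ℂ)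
      = ((2 * Real.pi * k / r : ℝ) : ℂ) * Complex.I by push_cast; ring]
  exact Complex.norm_exp_ofReal_mul_I _

lemma unitRoot_ne_zero (r k : ℕ) : unitRoot r k ≠ 0 :=
  Complex.exp_ne_zero _

lemma unitRoot_pow_self (r k : ℕ) : unitRoot r k ^ r = 1 := by
  rcases Nat.eq_zero_or_pos r with rfl | hr
  · exact pow_zero _
  have hr0 : (r : ℂ) ≠ 0 := Nat.cast_ne_zero.mpr hr.ne'
  rw [unitRoot, ← Complex.exp_nat_mul,
    show (r : ℂ) * (2 * Real.pi * Complex.I * k / r)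
        = ((k : ℤ) : ℂ) * (2 * Real.pi * Complex.I) by push_cast; field_simp]
  exact Complex.exp_int_mul_two_pi_mul_I k

lemma exists_unitRoot_eq {r : ℕ} (hr : 0 < r) {ω : ℂ} (hω : ω ^ r = 1) :
    ∃ k : Fin r, unitRoot r k = ω := by
  have : NeZero r := ⟨hr.ne'⟩
  obtain ⟨k, hk, rfl⟩ := (Complex.isPrimitiveRoot_exp r hr.ne').eq_pow_of_pow_eq_one hω
  refine ⟨⟨k, hk⟩, ?_⟩
  rw [unitRoot, ← Complex.exp_nat_mul]
  congr 1
  ring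

def torusZeros (F : (Fin n → ℂ) → ℂ) : Set (Fin n → ℂ) :=
  {z | (∀ i, z i ≠ 0) ∧ F z = 0}

def torusAmoeba (F : (Fin n → ℂ) → ℂ) : Set (Fin n → ℝ) :=
  {w | ∃ z : Fin n → ℂ, (∀ i, z i ≠ 0) ∧ F z = 0 ∧ ∀ i, w i = Real.log ‖z i‖}

lemma cresEval_eq_prod {d : ℕ} (b : Fin d → ℂ) (α : Fin d → Fin n → ℤ) (r : ℕ) :
    cresEval b α r =
      fun z => ∏ t : Fin n → Fin r, lauEval b α (fun i => unitRoot r (t i) * z i) :=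
  rfl

theorem torusZeros_prod_unitRoot (f : (Fin n → ℂ) → ℂ) {r : ℕ} (hr : 0 < r) :
    torusZeros (fun z => ∏ t : Fin n → Fin r, f (fun i => unitRoot r (t i) * z i)) =
      ⋃ ω ∈ {ω : Fin n → ℂ | ∀ i, ω i ^ r = 1},
        (fun z : Fin n → ℂ => fun i => ω i * z i) '' torusZeros f := by
  ext z
  simp only [torusZeros, Set.mem_ofPred_eq, Set.mem_iUnion, Set.mem_image, prod_eq_zero_iff,
    mem_univ, true_and]
  constructor
  · rintro ⟨hz, t, ht⟩
    refine ⟨fun i => (unitRoot r (t i))⁻¹,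
      fun i => by rw [inv_pow, unitRoot_pow_self, inv_one], fun i => unitRoot r (t i) * z i,
      ⟨fun i => mul_ne_zero (unitRoot_ne_zero _ _) (hz i), ht⟩, ?_⟩
    funext i
    rw [inv_mul_cancel_left₀ (unitRoot_ne_zero _ _)]
  · rintro ⟨ω, hω, z, ⟨hz, hfz⟩, rfl⟩
    have hω0 : ∀ i, ω i ≠ 0 := fun i => ne_zero_pow hr.ne' (by rw [hω i]; exact one_ne_zero)
    choose t ht using fun i =>
      exists_unitRoot_eq hr (ω := (ω i)⁻¹) (by rw [inv_pow, hω i, inv_one])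
    refine ⟨fun i => mul_ne_zero (hω0 i) (hz i), t, ?_⟩
    simpa only [ht, inv_mul_cancel_left₀ (hω0 _)] using hfz

theorem torusAmoeba_eq_of_torusZeros_eq_iUnion {F G : (Fin n → ℂ) → ℂ}
    {Ω : Set (Fin n → ℂ)}
    (hFG : torusZeros F =
      ⋃ ω ∈ Ω, (fun z : Fin n → ℂ => fun i => ω i * z i) '' torusZeros G)
    (hΩ : ∀ ω ∈ Ω, ∀ i, ‖ω i‖ = 1) (hΩne : Ω.Nonempty) :
    torusAmoeba F = torusAmoeba G := by
  have hlog : ∀ ω ∈ Ω, ∀ (z : Fin n → ℂ) i,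
      Real.log ‖ω i * z i‖ = Real.log ‖z i‖ :=
    fun ω hω z i => by rw [norm_mul, hΩ ω hω, one_mul]
  -- folds the zero set back into `torusZeros F`, so that `hFG` can rewrite it
  have hmem : ∀ z, (∀ i, z i ≠ 0) ∧ F z = 0 ↔ z ∈ torusZeros F := fun _ => Iff.rfl
  ext w
  simp only [torusAmoeba, Set.mem_ofPred_eq, ← and_assoc, hmem, hFG, Set.mem_iUnion,
    Set.mem_image]
  constructor
  · rintro ⟨-, ⟨ω, hω, z, hz, rfl⟩, hw⟩
    exact ⟨z, hz, fun i => (hw i).trans (hlog ω hω z i)⟩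
  · rintro ⟨z, hz, hw⟩
    obtain ⟨ω, hω⟩ := hΩne
    exact ⟨_, ⟨ω, hω, z, hz, rfl⟩, fun i => (hw i).trans (hlog ω hω z i).symm⟩

lemma torusAmoeba_congr {F G : (Fin n → ℂ) → ℂ}
    (h : ∀ z : Fin n → ℂ, (∀ i, z i ≠ 0) → F z = G z) :
    torusAmoeba F = torusAmoeba G := by
  ext w
  exact exists_congr fun z => and_congr_right fun hz => by rw [h z hz]

lemma norm_le_sum_erase_norm_of_sum_eq_zero {ι E : Type*} [SeminormedAddCommGroup E]
    [DecidableEq ι] {s : Finset ι} {x : ι → E} (hx : ∑ j ∈ s, x j = 0) {k : ι}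
    (hk : k ∈ s) :
    ‖x k‖ ≤ ∑ j ∈ s.erase k, ‖x j‖ := by
  rw [← add_sum_erase s x hk, add_eq_zero_iff_eq_neg] at hx
  rw [hx, norm_neg]
  exact norm_sum_le _ _

theorem amoeba_subset_lopAmoeba {e : ℕ} (c : Fin e → ℂ) (β : Fin e → Fin n → ℤ) :
    amoeba c β ⊆ lopAmoeba c β := by
  rintro w ⟨z, hz, hcz, hw⟩ ⟨k, hk⟩
  have hnorm : ∀ j,
      ‖c j * ∏ i, z i ^ β j i‖ = ‖c j‖ * ∏ i, Real.exp (w i) ^ β j i := by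
    intro j
    simp only [norm_mul, norm_prod, norm_zpow, hw, Real.exp_log (norm_pos_iff.mpr (hz _))]
  have hle := norm_le_sum_erase_norm_of_sum_eq_zero hcz (mem_univ k)
  simp only [hnorm] at hle
  exact hk.not_ge hle

end Amoeba

end

open Amoeba in
theorem cres_zero_set_and_amoeba_general
    (n d : ℕ) (b : Fin d → ℂ)
    (α : Fin d → Fin n → ℤ) (r : ℕ) (hr : 0 < r) :
    ({z : Fin n → ℂ | (∀ i, z i ≠ 0) ∧ cresEval b α r z = 0} =
      ⋃ ω ∈ {ω : Fin n → ℂ | ∀ i, ω i ^ r = 1},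
        (fun z : Fin n → ℂ => fun i => ω i * z i) ''
          {z : Fin n → ℂ | (∀ i, z i ≠ 0) ∧ lauEval b α z = 0})
    ∧ ({w : Fin n → ℝ | ∃ z : Fin n → ℂ, (∀ i, z i ≠ 0) ∧ cresEval b α r z = 0 ∧
        ∀ i, w i = Real.log ‖z i‖} = amoeba b α)
    ∧ ∀ (e : ℕ) (c : Fin e → ℂ) (β : Fin e → Fin n → ℤ),
        (∀ j, c j ≠ 0) → Function.Injective β →
        (∀ z : Fin n → ℂ, (∀ i, z i ≠ 0) → cresEval b α r z = lauEval c β z) →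
        amoeba b α ⊆ lopAmoeba c β := by
  have hzeros : torusZeros (cresEval b α r) =
      ⋃ ω ∈ {ω : Fin n → ℂ | ∀ i, ω i ^ r = 1},
        (fun z : Fin n → ℂ => fun i => ω i * z i) '' torusZeros (lauEval b α) := by
    rw [cresEval_eq_prod]
    exact torusZeros_prod_unitRoot _ hr
  have hamoeba : torusAmoeba (cresEval b α r) = amoeba b α :=
    torusAmoeba_eq_of_torusZeros_eq_iUnion hzeros
      (fun ω hω i => Complex.norm_eq_one_of_pow_eq_one (hω i) hr.ne') ⟨1, fun _ => one_pow r⟩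
  refine ⟨hzeros, hamoeba, fun e c β _ _ hcres => ?_⟩
  rw [← hamoeba, torusAmoeba_congr hcres]
  exact amoeba_subset_lopAmoeba c β

/-- The zero set of `cres(f;r)` on the torus is the union of the translates of
the zero set of `f` by `n`-tuples of `r`-th roots of unity; consequently
`A(cres(f;r)) = A(f)`, and `A(f) ⊆ L(cres(f;r))` for every `r ≥ 1`. -/
theorem cres_zero_set_and_amoeba
    (n d : ℕ) (hd : 0 < d) (b : Fin d → ℂ) (hb : ∀ j, b j ≠ 0)
    (α : Fin d → Fin n → ℤ) (hα : Function.Injective α) (r : ℕ) (hr : 0 < r) :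
    ({z : Fin n → ℂ | (∀ i, z i ≠ 0) ∧ cresEval b α r z = 0} =
      ⋃ ω ∈ {ω : Fin n → ℂ | ∀ i, ω i ^ r = 1},
        (fun z : Fin n → ℂ => fun i => ω i * z i) ''
          {z : Fin n → ℂ | (∀ i, z i ≠ 0) ∧ lauEval b α z = 0})
    ∧ ({w : Fin n → ℝ | ∃ z : Fin n → ℂ, (∀ i, z i ≠ 0) ∧ cresEval b α r z = 0 ∧
        ∀ i, w i = Real.log ‖z i‖} = amoeba b α)
    ∧ ∀ (e : ℕ) (c : Fin e → ℂ) (β : Fin e → Fin n → ℤ),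
        (∀ j, c j ≠ 0) → Function.Injective β →
        (∀ z : Fin n → ℂ, (∀ i, z i ≠ 0) → cresEval b α r z = lauEval c β z) →
        amoeba b α ⊆ lopAmoeba c β :=
  cres_zero_set_and_amoeba_general n d b α r hr
end
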